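/- arXiv:2201.08548 — 2 statements merged into one kernel-verified Lean document; each statement's English description precedes it below -/
import Mathlib

section
/- Let n = pq for distinct odd primes p, q, with n ∤ 2^l + 1 for all l ≥ 1, p ∤ 2^l + 1 for all l ≥ 1, and q ∤ 2^l + 1 for all l ≥ 1. Then neither the 2-cyclotomic coset C_p nor C_q modulo n is closed under negation. -/
/-- The 2-cyclotomic coset modulo `n` containing `i`. -/
def cyclotomicCoset (n : ℕ) (i : ZMod n) : Set (ZMod n) :=
  {x | ∃ j : ℕ, x = i * 2 ^ j}

theorem self_mem_cyclotomicCoset (n : ℕ) (i : ZMod n) : i ∈ cyclotomicCoset n i :=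
  ⟨0, by simp⟩

theorem not_forall_neg_mem_cyclotomicCoset {n : ℕ} {i : ZMod n}
    (h : -i ∉ cyclotomicCoset n i) :
    ¬ ∀ x ∈ cyclotomicCoset n i, -x ∈ cyclotomicCoset n i :=
  fun hneg => h (hneg i (self_mem_cyclotomicCoset n i))

theorem neg_natCast_mem_cyclotomicCoset_iff (n a : ℕ) :
    -(a : ZMod n) ∈ cyclotomicCoset n a ↔ ∃ j : ℕ, n ∣ a * (2 ^ j + 1) := by
  refine exists_congr fun j => ?_
  have hcast : ((a * (2 ^ j + 1) : ℕ) : ZMod n) = a + a * 2 ^ j := by push_cast; ring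
  rw [neg_eq_iff_add_eq_zero, ← hcast, ZMod.natCast_eq_zero_iff]

/-- An odd `b` cannot divide `2 ^ 0 + 1 = 2` unless `b = 1`, and `1` divides `2 ^ 1 + 1`. -/
theorem Odd.not_dvd_two_pow_add_one {b : ℕ} (hb : Odd b)
    (hbd : ∀ l : ℕ, 1 ≤ l → ¬ b ∣ 2 ^ l + 1) (j : ℕ) : ¬ b ∣ 2 ^ j + 1 := by
  rcases Nat.eq_zero_or_pos j with rfl | hj
  · intro hb2
    obtain rfl : b = 1 := hb.coprime_two_right.eq_one_of_dvd hb2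
    exact hbd 1 le_rfl (one_dvd _)
  · exact hbd j hj

theorem neg_natCast_notMem_cyclotomicCoset_mul {a b : ℕ} (ha : a ≠ 0)
    (hb : ∀ j : ℕ, ¬ b ∣ 2 ^ j + 1) :
    -(a : ZMod (a * b)) ∉ cyclotomicCoset (a * b) a := by
  rw [neg_natCast_mem_cyclotomicCoset_iff]
  rintro ⟨j, hj⟩
  exact hb j (Nat.dvd_of_mul_dvd_mul_left (Nat.pos_of_ne_zero ha) hj)

theorem cyclotomicCoset_p_q_not_neg_closed_general (p q : ℕ)
    (hpo : Odd p) (hqo : Odd q)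
    (hpd : ∀ l : ℕ, 1 ≤ l → ¬ (p ∣ 2 ^ l + 1))
    (hqd : ∀ l : ℕ, 1 ≤ l → ¬ (q ∣ 2 ^ l + 1)) :
    ¬ (∀ x ∈ cyclotomicCoset (p * q) (p : ZMod (p * q)),
        -x ∈ cyclotomicCoset (p * q) (p : ZMod (p * q))) ∧
    ¬ (∀ x ∈ cyclotomicCoset (p * q) (q : ZMod (p * q)),
        -x ∈ cyclotomicCoset (p * q) (q : ZMod (p * q))) := by
  refine ⟨not_forall_neg_mem_cyclotomicCoset
    (neg_natCast_notMem_cyclotomicCoset_mul hpo.pos.ne' (hqo.not_dvd_two_pow_add_one hqd)), ?_⟩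
  rw [mul_comm p q]
  exact not_forall_neg_mem_cyclotomicCoset
    (neg_natCast_notMem_cyclotomicCoset_mul hqo.pos.ne' (hpo.not_dvd_two_pow_add_one hpd))

theorem cyclotomicCoset_p_q_not_neg_closed (p q : ℕ) (hp : p.Prime) (hq : q.Prime)
    (hpo : Odd p) (hqo : Odd q) (hpq : p ≠ q)
    (hn : ∀ l : ℕ, 1 ≤ l → ¬ (p * q ∣ 2 ^ l + 1))
    (hpd : ∀ l : ℕ, 1 ≤ l → ¬ (p ∣ 2 ^ l + 1))
    (hqd : ∀ l : ℕ, 1 ≤ l → ¬ (q ∣ 2 ^ l + 1)) :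
    ¬ (∀ x ∈ cyclotomicCoset (p * q) (p : ZMod (p * q)),
        -x ∈ cyclotomicCoset (p * q) (p : ZMod (p * q))) ∧
    ¬ (∀ x ∈ cyclotomicCoset (p * q) (q : ZMod (p * q)),
        -x ∈ cyclotomicCoset (p * q) (q : ZMod (p * q))) :=
  cyclotomicCoset_p_q_not_neg_closed_general p q hpo hqo hpd hqd
end

section
/- Let G be a cyclic group of order n = p^s for an odd prime p, with n not dividing 2^m + 1 for any m ≥ 1, and let t be the number of distinct 2-cyclotomic cosets modulo n. Then the number of nonzero idempotents e ∈ F₂[G] with e = ê is 2^{(t+1)/2} − 1. -/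
theorem prime_pow_add_dvd_two_pow_mul_add_one {p : ℕ} (hp : p.Prime) (hodd : Odd p) {k j : ℕ}
    (hk : k ≠ 0) (h : p ^ k ∣ 2 ^ j + 1) (a : ℕ) : p ^ (k + a) ∣ 2 ^ (j * p ^ a) + 1 := by
  have := Fact.mk hp
  have hp_dvd : p ∣ 2 ^ j + 1 := (dvd_pow_self p hk).trans h
  have hp_ndvd : ¬ p ∣ 2 ^ j := fun h' => hp.not_dvd_one ((Nat.dvd_add_right h').mp hp_dvd)
  rw [padicValNat_dvd_iff_le (by positivity)] at h ⊢
  rw [pow_mul, ← one_pow (p ^ a), padicValNat.pow_add_pow hodd hp_dvd hp_ndvd hodd.pow,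
    padicValNat.prime_pow]
  omega

theorem neg_notMem_cyclotomicCoset {p s : ℕ} (hp : p.Prime) (hodd : Odd p)
    (hdiv : ∀ m : ℕ, 1 ≤ m → ¬ (p ^ s ∣ 2 ^ m + 1)) {i : ZMod (p ^ s)} (hi : i ≠ 0) :
    -i ∉ cyclotomicCoset (p ^ s) i := by
  have := Fact.mk hp
  have : NeZero (p ^ s) := ⟨pow_ne_zero s hp.ne_zero⟩
  rintro ⟨j, hj⟩
  set a := padicValNat p i.val
  have hval : i.val ≠ 0 := (ZMod.val_ne_zero i).mpr hi
  have ha : a < s := by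
    have : p ^ a < p ^ s := (Nat.le_of_dvd (Nat.pos_of_ne_zero hval) pow_padicValNat_dvd).trans_lt
      (ZMod.val_lt i)
    exact (Nat.pow_lt_pow_iff_right hp.one_lt).mp this
  have hdvd : p ^ s ∣ i.val * (2 ^ j + 1) := by
    rw [← ZMod.natCast_eq_zero_iff]
    push_cast [ZMod.natCast_val, ZMod.cast_id]
    linear_combination -hj
  have hdvd' : p ^ (s - a) ∣ 2 ^ j + 1 := by
    rw [padicValNat_dvd_iff_le (by positivity)] at hdvd ⊢
    rw [padicValNat.mul hval (by positivity)] at hdvd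
    omega
  have hj : j ≠ 0 := by
    rintro rfl
    have : p ∣ 2 := (dvd_pow_self p (by omega)).trans hdvd'
    rw [(Nat.prime_dvd_prime_iff_eq hp Nat.prime_two).mp this] at hodd
    exact Nat.not_odd_iff_even.mpr even_two hodd
  have := prime_pow_add_dvd_two_pow_mul_add_one hp hodd (by omega) hdvd' a
  rw [Nat.sub_add_cancel ha.le] at this
  exact hdiv _ (Nat.one_le_iff_ne_zero.mpr (mul_ne_zero hj (pow_ne_zero a hp.ne_zero))) this

theorem ncard_setOf_factorsThrough {α β γ : Type*} [Finite α] [Finite β] (D : α → γ) :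
    {v : α → β | v.FactorsThrough D}.ncard = Nat.card β ^ (Set.range D).ncard := by
  rw [← Nat.card_coe_set_eq, ← Nat.card_coe_set_eq,
    ← Nat.card_congr (Setoid.quotientKerEquivRange D), ← Nat.card_fun,
    ← Nat.card_congr (Setoid.liftEquiv (Setoid.ker D))]
  rfl

def symmCyclotomicCoset (n : ℕ) (i : ZMod n) : Set (ZMod n) :=
  cyclotomicCoset n i ∪ cyclotomicCoset n (-i)

section CyclotomicCoset

variable {n : ℕ}

theorem mem_cyclotomicCoset_self (i : ZMod n) : i ∈ cyclotomicCoset n i := ⟨0, by simp⟩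

theorem cyclotomicCoset_zero : cyclotomicCoset n 0 = {0} := by
  ext; simp [cyclotomicCoset]

theorem neg_cyclotomicCoset (i : ZMod n) : -cyclotomicCoset n i = cyclotomicCoset n (-i) := by
  ext x
  simp only [cyclotomicCoset, Set.mem_neg, Set.mem_ofPred_eq, neg_eq_iff_eq_neg, neg_mul]

theorem cyclotomicCoset_union_neg (i : ZMod n) :
    cyclotomicCoset n i ∪ -cyclotomicCoset n i = symmCyclotomicCoset n i := by
  rw [neg_cyclotomicCoset, symmCyclotomicCoset]

theorem exists_two_pow_mul_two_pow_eq_one (hn : Odd n) (j : ℕ) :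
    ∃ m : ℕ, (2 : ZMod n) ^ j * 2 ^ m = 1 := by
  have h2 := congrArg Units.val
    (ZMod.pow_totient (ZMod.unitOfCoprime 2 (Nat.coprime_two_left.mpr hn)))
  rw [Units.val_pow_eq_pow_val, ZMod.coe_unitOfCoprime, Units.val_one, Nat.cast_ofNat] at h2
  obtain ⟨k, hk⟩ : ∃ k, n.totient = k + 1 :=
    ⟨_, (Nat.succ_pred_eq_of_pos (Nat.totient_pos.mpr hn.pos)).symm⟩
  refine ⟨k * j, ?_⟩
  rw [← pow_add, show j + k * j = n.totient * j by rw [hk]; ring, pow_mul, h2, one_pow]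

theorem cyclotomicCoset_eq_of_mem (hn : Odd n) {i x : ZMod n} (hx : x ∈ cyclotomicCoset n i) :
    cyclotomicCoset n x = cyclotomicCoset n i := by
  obtain ⟨j, rfl⟩ := hx
  obtain ⟨m, hm⟩ := exists_two_pow_mul_two_pow_eq_one hn j
  ext y
  constructor
  · rintro ⟨l, rfl⟩
    exact ⟨j + l, by ring⟩
  · rintro ⟨l, rfl⟩
    exact ⟨m + l, by linear_combination (-i * 2 ^ l) * hm⟩

theorem symmCyclotomicCoset_eq_iff (hn : Odd n) {i x : ZMod n} :
    symmCyclotomicCoset n x = symmCyclotomicCoset n i ↔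
      cyclotomicCoset n x = cyclotomicCoset n i ∨ cyclotomicCoset n x = cyclotomicCoset n (-i) := by
  constructor
  · intro h
    have hx : x ∈ symmCyclotomicCoset n i := h ▸ Or.inl (mem_cyclotomicCoset_self x)
    exact hx.imp (cyclotomicCoset_eq_of_mem hn) (cyclotomicCoset_eq_of_mem hn)
  · simp only [symmCyclotomicCoset, ← neg_cyclotomicCoset]
    rintro (h | h) <;> rw [h]
    rw [neg_neg, Set.union_comm]

theorem symmCyclotomicCoset_neg (i : ZMod n) :
    symmCyclotomicCoset n (-i) = symmCyclotomicCoset n i := by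
  rw [symmCyclotomicCoset, neg_neg, Set.union_comm, symmCyclotomicCoset]

theorem symmCyclotomicCoset_two_mul (hn : Odd n) (i : ZMod n) :
    symmCyclotomicCoset n (2 * i) = symmCyclotomicCoset n i :=
  (symmCyclotomicCoset_eq_iff hn).mpr (Or.inl (cyclotomicCoset_eq_of_mem hn ⟨1, by ring⟩))

theorem symmCyclotomicCoset_eq_zero_iff (hn : Odd n) {i : ZMod n} :
    symmCyclotomicCoset n i = symmCyclotomicCoset n 0 ↔ i = 0 := by
  refine ⟨fun h => ?_, fun h => h ▸ rfl⟩
  have hi : cyclotomicCoset n i = {0} := by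
    simpa [cyclotomicCoset_zero] using (symmCyclotomicCoset_eq_iff hn).mp h
  simpa [hi] using mem_cyclotomicCoset_self i

open Finset in
theorem ncard_range_cyclotomicCoset_add_one (hn : Odd n)
    (hneg : ∀ i : ZMod n, i ≠ 0 → -i ∉ cyclotomicCoset n i) :
    (Set.range (cyclotomicCoset n)).ncard + 1 = 2 * (Set.range (symmCyclotomicCoset n)).ncard := by
  classical
  have : NeZero n := ⟨hn.pos.ne'⟩
  set A := univ.image (cyclotomicCoset n)
  set B := univ.image (symmCyclotomicCoset n)
  have hmaps : (A : Set (Set (ZMod n))).MapsTo (fun S => S ∪ -S) B := by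
    simp [A, B, Set.mapsTo_range_iff, cyclotomicCoset_union_neg]
  have hfiber (i : ZMod n) : {S ∈ A | S ∪ -S = symmCyclotomicCoset n i} =
      {cyclotomicCoset n i, cyclotomicCoset n (-i)} := by
    ext S
    simp only [A, mem_filter, mem_image, mem_univ, true_and, mem_insert, mem_singleton]
    constructor
    · rintro ⟨⟨x, rfl⟩, hx⟩
      exact (symmCyclotomicCoset_eq_iff hn).mp (cyclotomicCoset_union_neg x ▸ hx)
    · rintro (rfl | rfl)
      · exact ⟨⟨i, rfl⟩, cyclotomicCoset_union_neg i⟩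
      · exact ⟨⟨-i, rfl⟩, (cyclotomicCoset_union_neg _).trans (symmCyclotomicCoset_neg i)⟩
  have hfiber_card : ∀ S ∈ B,
      #{T ∈ A | T ∪ -T = S} + (if S = symmCyclotomicCoset n 0 then 1 else 0) = 2 := by
    simp only [B, mem_image, mem_univ, true_and, forall_exists_index, forall_apply_eq_imp_iff]
    intro i
    rw [hfiber]
    by_cases hi : i = 0
    · simp [hi]
    · have hne : cyclotomicCoset n i ≠ cyclotomicCoset n (-i) :=
        fun h => hneg i hi (h ▸ mem_cyclotomicCoset_self (-i))
      rw [if_neg (mt (symmCyclotomicCoset_eq_zero_iff hn).mp hi), card_pair hne]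
  have h0 : symmCyclotomicCoset n 0 ∈ B := mem_image_of_mem _ (mem_univ 0)
  have key := sum_congr rfl hfiber_card
  rw [sum_add_distrib, ← card_eq_sum_card_fiberwise hmaps, sum_ite_eq', if_pos h0, sum_const,
    smul_eq_mul] at key
  simpa [A, B, ← Set.ncard_coe_finset, mul_comm] using key

theorem factorsThrough_symmCyclotomicCoset_iff {α : Type*} (hn : Odd n) (v : ZMod n → α) :
    v.FactorsThrough (symmCyclotomicCoset n) ↔ (∀ x, v (2 * x) = v x) ∧ ∀ x, v (-x) = v x := by
  constructor
  · intro h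
    exact ⟨fun x => h (symmCyclotomicCoset_two_mul hn x), fun x => h (symmCyclotomicCoset_neg x)⟩
  · rintro ⟨h2, hneg⟩ x y hxy
    have hpow (j : ℕ) : v (y * 2 ^ j) = v y := by
      induction j with
      | zero => simp
      | succ j ih => rw [pow_succ, ← mul_assoc, mul_comm, h2, ih]
    have hx : x ∈ symmCyclotomicCoset n y := hxy ▸ Or.inl (mem_cyclotomicCoset_self x)
    rcases hx with ⟨j, rfl⟩ | ⟨j, rfl⟩
    · exact hpow j
    · rw [neg_mul, hneg, hpow]

theorem ncard_two_mul_neg_invariant (hn : Odd n) :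
    {v : ZMod n → ZMod 2 | v ≠ 0 ∧ (∀ x, v (2 * x) = v x) ∧ ∀ x, v (-x) = v x}.ncard =
      2 ^ (Set.range (symmCyclotomicCoset n)).ncard - 1 := by
  have : NeZero n := ⟨hn.pos.ne'⟩
  have hdiff : {v : ZMod n → ZMod 2 | v ≠ 0 ∧ (∀ x, v (2 * x) = v x) ∧ ∀ x, v (-x) = v x} =
      {v | v.FactorsThrough (symmCyclotomicCoset n)} \ {0} := by
    ext v
    simp [factorsThrough_symmCyclotomicCoset_iff hn, and_comm]
  rw [hdiff, Set.ncard_sdiff_singleton_of_mem (fun _ _ _ => rfl : (0 : ZMod n → ZMod 2) ∈ _),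
    ncard_setOf_factorsThrough, Nat.card_zmod]

end CyclotomicCoset

theorem Finsupp.mapDomain_eq_self_iff {α M : Type*} [AddCommMonoid M] {f : α → α}
    (hf : f.Bijective) (c : α →₀ M) : mapDomain f c = c ↔ ∀ a, c (f a) = c a := by
  rw [Finsupp.ext_iff, hf.surjective.forall]
  simp only [mapDomain_apply hf.injective, eq_comm]

namespace MonoidAlgebra

variable {G : Type*} [CommGroup G]

theorem mul_self_eq_mapDomain_mul_self (e : MonoidAlgebra (ZMod 2) G) :
    e * e = mapDomain (fun g => g * g) e := by
  have : CharP (MonoidAlgebra (ZMod 2) G) 2 := charP_of_injective_algebraMap' (ZMod 2) 2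
  induction e using MonoidAlgebra.induction_linear with
  | zero => simp
  | add x y hx hy => rw [CharTwo.add_mul_self, hx, hy, mapDomain_add]
  | single g r =>
    rw [single_mul_single, mapDomain_single]
    congr 1
    fin_cases r <;> rfl

theorem mul_self_eq_self_iff_coeff_mul_self (hG : Odd (Nat.card G))
    (e : MonoidAlgebra (ZMod 2) G) : e * e = e ↔ ∀ g, e.coeff (g * g) = e.coeff g := by
  have hsq : Function.Bijective (fun g : G => g * g) := by
    convert (powCoprime (Nat.coprime_comm.mp (Nat.coprime_two_left.mpr hG))).bijective using 2
    exact (sq _).symm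
  rw [mul_self_eq_mapDomain_mul_self, ← coeff_inj, coeff_mapDomain,
    Finsupp.mapDomain_eq_self_iff hsq]

theorem ncard_idempotent_inv_invariant [Finite G] (hG : Odd (Nat.card G)) :
    {e : MonoidAlgebra (ZMod 2) G |
        e ≠ 0 ∧ e * e = e ∧ Finsupp.mapDomain (fun g : G => g⁻¹) e.coeff = e.coeff}.ncard =
      {f : G → ZMod 2 | f ≠ 0 ∧ (∀ g, f (g * g) = f g) ∧ ∀ g, f g⁻¹ = f g}.ncard := by
  let E : MonoidAlgebra (ZMod 2) G ≃+ (G → ZMod 2) :=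
    coeffAddEquiv.trans (Finsupp.linearEquivFunOnFinite (ZMod 2) (ZMod 2) G).toAddEquiv
  have hpre : {e : MonoidAlgebra (ZMod 2) G |
      e ≠ 0 ∧ e * e = e ∧ Finsupp.mapDomain (fun g : G => g⁻¹) e.coeff = e.coeff} =
      E ⁻¹' {f | f ≠ 0 ∧ (∀ g, f (g * g) = f g) ∧ ∀ g, f g⁻¹ = f g} := by
    ext e
    simp [E, mul_self_eq_self_iff_coeff_mul_self hG,
      Finsupp.mapDomain_eq_self_iff inv_involutive.bijective]
  rw [hpre, Set.ncard_preimage_of_injective_subset_range E.injective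
    (by simp [E.surjective.range_eq])]

end MonoidAlgebra

theorem ncard_sq_inv_invariant_eq_zmod {G β : Type*} [Group G] [Zero β] {n : ℕ}
    (ψ : Multiplicative (ZMod n) ≃* G) :
    {f : G → β | f ≠ 0 ∧ (∀ g, f (g * g) = f g) ∧ ∀ g, f g⁻¹ = f g}.ncard =
      {v : ZMod n → β | v ≠ 0 ∧ (∀ x, v (2 * x) = v x) ∧ ∀ x, v (-x) = v x}.ncard := by
  let F : (G → β) ≃ (ZMod n → β) :=
    Equiv.arrowCongr (ψ.symm.toEquiv.trans Multiplicative.toAdd) (Equiv.refl β)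
  have hF (f : G → β) (x : ZMod n) : F f x = f (ψ (Multiplicative.ofAdd x)) := rfl
  have hpre : {f : G → β | f ≠ 0 ∧ (∀ g, f (g * g) = f g) ∧ ∀ g, f g⁻¹ = f g} =
      F ⁻¹' {v | v ≠ 0 ∧ (∀ x, v (2 * x) = v x) ∧ ∀ x, v (-x) = v x} := by
    ext f
    have hsurj := (Multiplicative.ofAdd.trans ψ.toEquiv).surjective
    simp only [Set.mem_ofPred_eq, Set.mem_preimage, hF, hsurj.forall, Equiv.trans_apply,
      MulEquiv.toEquiv_eq_coe, MulEquiv.coe_toEquiv, two_mul, ofAdd_add, ofAdd_neg, map_mul,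
      map_inv, F.injective.ne_iff' (show F 0 = 0 from rfl)]
  rw [hpre, Set.ncard_preimage_of_injective_subset_range F.injective
    (by simp [F.surjective.range_eq])]

theorem count_lcd_group_codes_prime_pow_general {G : Type*} [Group G] [Fintype G]
    (hcyc : IsCyclic G) (p s : ℕ) (hp : p.Prime) (hodd : Odd p)
    (hcard : Fintype.card G = p ^ s)
    (hdiv : ∀ m : ℕ, 1 ≤ m → ¬ (p ^ s ∣ 2 ^ m + 1))
    (t : ℕ)
    (ht : t = Set.ncard {S : Set (ZMod (p ^ s)) | ∃ i : ZMod (p ^ s), S = cyclotomicCoset (p ^ s) i}) :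
    Set.ncard {e : MonoidAlgebra (ZMod 2) G |
        e ≠ 0 ∧ e * e = e ∧ Finsupp.mapDomain (fun g : G => g⁻¹) e.coeff = e.coeff}
      = 2 ^ ((t + 1) / 2) - 1 := by
  have := hcyc
  let _ : CommGroup G := IsCyclic.commGroup
  have hn : Odd (p ^ s) := hodd.pow
  have hG : Nat.card G = p ^ s := Nat.card_eq_fintype_card.trans hcard
  let ψ : Multiplicative (ZMod (p ^ s)) ≃* G :=
    mulEquivOfCyclicCardEq ((Nat.card_zmod _).trans hG.symm)
  have ht' : t + 1 = 2 * (Set.range (symmCyclotomicCoset (p ^ s))).ncard := by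
    rw [← ncard_range_cyclotomicCoset_add_one hn
      (fun _ hi => neg_notMem_cyclotomicCoset hp hodd hdiv hi), ht]
    simp only [Set.range, eq_comm]
  rw [MonoidAlgebra.ncard_idempotent_inv_invariant (hG ▸ hn), ncard_sq_inv_invariant_eq_zmod ψ,
    ncard_two_mul_neg_invariant hn]
  congr 2
  omega

theorem count_lcd_group_codes_prime_pow {G : Type*} [Group G] [Fintype G]
    (hcyc : IsCyclic G) (p s : ℕ) (hp : p.Prime) (hodd : Odd p) (hs : 1 ≤ s)
    (hcard : Fintype.card G = p ^ s)
    (hdiv : ∀ m : ℕ, 1 ≤ m → ¬ (p ^ s ∣ 2 ^ m + 1))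
    (t : ℕ)
    (ht : t = Set.ncard {S : Set (ZMod (p ^ s)) | ∃ i : ZMod (p ^ s), S = cyclotomicCoset (p ^ s) i}) :
    Set.ncard {e : MonoidAlgebra (ZMod 2) G |
        e ≠ 0 ∧ e * e = e ∧ Finsupp.mapDomain (fun g : G => g⁻¹) e.coeff = e.coeff}
      = 2 ^ ((t + 1) / 2) - 1 :=
  count_lcd_group_codes_prime_pow_general hcyc p s hp hodd hcard hdiv t ht
end
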